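/- arXiv:2503.09458 — 3 statements merged into one kernel-verified Lean document; each statement's English description precedes it below -/
import Mathlib

section
/- Let G be a d-regular graph with k > d/2 an integer. Given a k-star decomposition of G (a partition of E(G) into stars with k edges each), the set A of vertices that are not the center of any star is an independent set of density 1 - d/(2k); i.e., |A| = |V(G)|(1 - d/(2k)) and no edge of G has both endpoints in A. -/
open SimpleGraph Set

/-- A `k`-star decomposition of `G`: a partition `P` of the edge set of `G` into parts of
size `k`, each part `S` being a star with designated center `ctr S` incident to all its edges. -/
def IsStarDecomp {V : Type*} (G : SimpleGraph V) (k : ℕ)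
    (P : Set (Set (Sym2 V))) (ctr : Set (Sym2 V) → V) : Prop :=
  (∀ S ∈ P, S.ncard = k) ∧
  (∀ S ∈ P, S ⊆ G.edgeSet) ∧
  (∀ S ∈ P, ∀ e ∈ S, ctr S ∈ e) ∧
  (∀ e ∈ G.edgeSet, ∃! S, S ∈ P ∧ e ∈ S)

/-!
Two stars with the same center `v` would be disjoint sets of `k` edges at `v`, i.e. `2 * k > d`
edges at `v`; so the centers are distinct and there are exactly `|P|` of them. An edge between
two non-centers could not belong to any star. Finally, counting edges twice,
`n * d = 2 * |E| = 2 * k * |P|`, hence `|A| = n - |P| = n * (1 - d / (2 * k))`.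
-/

lemma SimpleGraph.IsRegularOfDegree.card_mul_eq_two_mul_ncard_edgeSet {V : Type*} [Fintype V]
    {G : SimpleGraph V} [DecidableRel G.Adj] {d : ℕ} (h : G.IsRegularOfDegree d) :
    Fintype.card V * d = 2 * G.edgeSet.ncard := by
  classical
  rw [← coe_edgeFinset, ncard_coe_finset, ← sum_degrees_eq_twice_card_edges]
  simp [h _]

namespace IsStarDecomp

variable {V : Type*} {G : SimpleGraph V} {k : ℕ} {P : Set (Set (Sym2 V))}
  {ctr : Set (Sym2 V) → V}

lemma disjoint_of_ne (h : IsStarDecomp G k P ctr) {S₁ S₂ : Set (Sym2 V)} (h₁ : S₁ ∈ P)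
    (h₂ : S₂ ∈ P) (hne : S₁ ≠ S₂) : Disjoint S₁ S₂ :=
  Set.disjoint_left.2 fun e he₁ he₂ =>
    hne ((h.2.2.2 e (h.2.1 S₁ h₁ he₁)).unique ⟨h₁, he₁⟩ ⟨h₂, he₂⟩)

lemma pairwiseDisjoint (h : IsStarDecomp G k P ctr) : P.PairwiseDisjoint id :=
  fun _ h₁ _ h₂ => h.disjoint_of_ne h₁ h₂

lemma sUnion_eq_edgeSet (h : IsStarDecomp G k P ctr) : ⋃₀ P = G.edgeSet := by
  refine (sUnion_subset h.2.1).antisymm fun e he => ?_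
  obtain ⟨S, ⟨hS, heS⟩, -⟩ := h.2.2.2 e he
  exact ⟨S, hS, heS⟩

lemma subset_incidenceSet (h : IsStarDecomp G k P ctr) {S : Set (Sym2 V)} (hS : S ∈ P) :
    S ⊆ G.incidenceSet (ctr S) :=
  fun e he => ⟨h.2.1 S hS he, h.2.2.1 S hS e he⟩

lemma injOn_ctr [G.LocallyFinite] (h : IsStarDecomp G k P ctr)
    (hdeg : ∀ v, G.degree v < 2 * k) : InjOn ctr P := by
  classical
  intro S₁ h₁ S₂ h₂ hctr
  by_contra hne
  have hunion : S₁ ∪ S₂ ⊆ G.incidenceSet (ctr S₁) :=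
    union_subset (h.subset_incidenceSet h₁) (hctr ▸ h.subset_incidenceSet h₂)
  have hfin : (G.incidenceSet (ctr S₁)).Finite := toFinite _
  have hle := ncard_le_ncard hunion hfin
  rw [ncard_union_eq (h.disjoint_of_ne h₁ h₂ hne) (hfin.subset (h.subset_incidenceSet h₁))
      (hfin.subset (hctr ▸ h.subset_incidenceSet h₂)), h.1 S₁ h₁, h.1 S₂ h₂,
    ncard_eq_toFinset_card', toFinset_card, card_incidenceSet_eq_degree] at hle
  linarith [hdeg (ctr S₁)]

lemma ncard_edgeSet [Finite V] (h : IsStarDecomp G k P ctr) :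
    G.edgeSet.ncard = P.ncard * k := by
  rw [← h.sUnion_eq_edgeSet, sUnion_eq_biUnion,
    (toFinite P).ncard_biUnion (s := fun S => S) (fun _ _ => toFinite _) h.pairwiseDisjoint,
    finsum_mem_congr rfl h.1, ← finsum_one, finsum_mem_mul]
  simp

lemma not_adj {a b : V} (h : IsStarDecomp G k P ctr) (ha : a ∉ ctr '' P) (hb : b ∉ ctr '' P) :
    ¬ G.Adj a b := by
  intro hab
  obtain ⟨S, ⟨hS, heS⟩, -⟩ := h.2.2.2 s(a, b) hab
  rcases Sym2.mem_iff.1 (h.2.2.1 S hS _ heS) with hc | hc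
  exacts [ha ⟨S, hS, hc⟩, hb ⟨S, hS, hc⟩]

end IsStarDecomp

theorem stmt_0 {V : Type*} [Fintype V] {d k : ℕ} (G : SimpleGraph V)
    [DecidableRel G.Adj]
    (hreg : G.IsRegularOfDegree d) (hk : d < 2 * k)
    (P : Set (Set (Sym2 V))) (ctr : Set (Sym2 V) → V)
    (hP : IsStarDecomp G k P ctr)
    (A : Set V) (hA : A = {v : V | ∀ S ∈ P, ctr S ≠ v}) :
    (∀ a ∈ A, ∀ b ∈ A, ¬ G.Adj a b) ∧
    (A.ncard : ℝ) = (Fintype.card V : ℝ) * (1 - (d : ℝ) / (2 * k)) := by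
  obtain rfl : A = (ctr '' P)ᶜ := by
    rw [hA]
    ext
    simp
  refine ⟨fun a ha b hb => hP.not_adj ha hb, ?_⟩
  have hcenters : (ctr '' P).ncard = P.ncard :=
    (hP.injOn_ctr fun v => hreg v ▸ hk).ncard_image
  have hsplit : ((ctr '' P)ᶜ.ncard : ℝ) + P.ncard = Fintype.card V := by
    rw [← hcenters, add_comm, ← Nat.card_eq_fintype_card]
    exact_mod_cast ncard_add_ncard_compl (ctr '' P)
  have hcount : (Fintype.card V : ℝ) * d = 2 * (P.ncard * k) := by
    exact_mod_cast hP.ncard_edgeSet ▸ hreg.card_mul_eq_two_mul_ncard_edgeSet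
  have hk0 : (k : ℝ) ≠ 0 := Nat.cast_ne_zero.2 (by omega)
  rw [← hsplit] at hcount ⊢
  field_simp
  linear_combination hcount
end

section
/- Let H be a finite graph with e(H) = \ell |V(H)| for some natural number \ell. Then H has an orientation in which every in-degree equals \ell if and only if for every subset U of V(H), the number of edges with both endpoints in U is at most \ell |U|. -/
open SimpleGraph Set

/-- An orientation of `G`, given as a relation `r` selecting, for each edge, exactly one
of its two directions. -/
def IsOrientation {V : Type*} (G : SimpleGraph V) (r : V → V → Prop) : Prop :=
  (∀ a b, r a b → G.Adj a b) ∧ (∀ a b, G.Adj a b → (r a b ↔ ¬ r b a))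

/-- The number of edges of `G` with both endpoints in `U`. -/
noncomputable def edgesIn {V : Type*} (G : SimpleGraph V) (U : Set V) : ℕ :=
  {e ∈ G.edgeSet | ∀ x ∈ e, x ∈ U}.ncard

/-!
If every in-degree is `ℓ`, each edge inside `U` has its head in `U`, so `e[U]` is at most the
sum of the in-degrees over `U`, which is `ℓ |U|`.

Conversely, apply Hall's theorem to the bipartite graph joining each edge to `ℓ` copies of each
of its endpoints: for a set `S` of edges with endpoint set `W`, Hall's condition
`|S| ≤ ℓ |W|` follows from `|S| ≤ e[W] ≤ ℓ |W|`. The matching chooses a head for every edge so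
that each vertex is the head of at most `ℓ` edges, and since `e(H) = ℓ |V(H)|`, each vertex is
the head of exactly `ℓ` edges.
-/

theorem Set.ncard_preimage_singleton_eq_of_le {α β : Type*} [Finite α] [Finite β] (f : α → β)
    {ℓ : ℕ} (hle : ∀ b, (f ⁻¹' {b}).ncard ≤ ℓ) (hcard : Nat.card α = ℓ * Nat.card β) (b : β) :
    (f ⁻¹' {b}).ncard = ℓ := by
  classical
  have := Fintype.ofFinite α
  have := Fintype.ofFinite β
  have hsum : ∑ b, (f ⁻¹' {b}).ncard = ∑ _b : β, ℓ := by
    rw [Finset.sum_const, Finset.card_univ, smul_eq_mul, ← Nat.card_eq_fintype_card, mul_comm,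
      ← hcard, ← Nat.card_congr (Equiv.sigmaFiberEquiv f), Nat.card_sigma]
    rfl
  exact (Finset.sum_eq_sum_iff_of_le fun b _ => hle b).1 hsum b (Finset.mem_univ b)

namespace SimpleGraph

variable {V : Type*} (G : SimpleGraph V)

theorem edgesIn_le_of_isOrientation [Finite V] {r : V → V → Prop} (hr : IsOrientation G r)
    {ℓ : ℕ} (hdeg : ∀ v, {u | r u v}.ncard ≤ ℓ) (U : Set V) :
    edgesIn G U ≤ ℓ * U.ncard := by
  have hsub : {e ∈ G.edgeSet | ∀ x ∈ e, x ∈ U} ⊆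
      ⋃ v ∈ U.toFinite.toFinset, (fun u => s(u, v)) '' {u | r u v} := by
    rintro ⟨a, b⟩ ⟨hab, hU⟩
    simp only [Set.Finite.mem_toFinset, Set.mem_iUnion, Set.mem_image]
    by_cases h : r a b
    · exact ⟨b, hU b (Sym2.mem_mk_right a b), a, h, rfl⟩
    · have hba : r b a := by simpa [h] using (hr.2 b a (G.adj_symm hab))
      exact ⟨a, hU a (Sym2.mem_mk_left a b), b, hba, Sym2.eq_swap⟩
  calc edgesIn G U
      ≤ (⋃ v ∈ U.toFinite.toFinset, (fun u => s(u, v)) '' {u | r u v}).ncard :=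
        Set.ncard_le_ncard hsub
    _ ≤ ∑ v ∈ U.toFinite.toFinset, ((fun u => s(u, v)) '' {u | r u v}).ncard :=
        Finset.set_ncard_biUnion_le _ _
    _ ≤ ∑ _v ∈ U.toFinite.toFinset, ℓ :=
        Finset.sum_le_sum fun v _ => (Set.ncard_image_le).trans (hdeg v)
    _ = ℓ * U.ncard := by
        rw [Finset.sum_const, smul_eq_mul, mul_comm, Set.ncard_eq_toFinset_card U]

theorem ncard_le_edgesIn [Finite V] {s : Set G.edgeSet} {U : Set V}
    (hs : ∀ e ∈ s, ∀ x ∈ (e : Sym2 V), x ∈ U) : s.ncard ≤ edgesIn G U := by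
  rw [← Set.ncard_image_of_injective s Subtype.val_injective]
  refine Set.ncard_le_ncard ?_
  rintro _ ⟨e, he, rfl⟩
  exact ⟨e.2, hs e he⟩

theorem exists_head_of_edgesIn_le [Finite V] {ℓ : ℕ}
    (hU : ∀ U : Set V, edgesIn G U ≤ ℓ * U.ncard) :
    ∃ head : G.edgeSet → V,
      (∀ e : G.edgeSet, head e ∈ (e : Sym2 V)) ∧ ∀ v, (head ⁻¹' {v}).ncard ≤ ℓ := by
  classical
  let t : G.edgeSet → Finset (V × Fin ℓ) := fun e => (e : Sym2 V).toFinset ×ˢ Finset.univ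
  have hall : ∀ s : Finset G.edgeSet, s.card ≤ (s.biUnion t).card := by
    intro s
    let W : Finset V := s.biUnion fun e => (e : Sym2 V).toFinset
    have hW : s.biUnion t = W ×ˢ Finset.univ := by
      ext ⟨v, i⟩
      simp [t, W]
    calc s.card = (s : Set G.edgeSet).ncard := (Set.ncard_coe_finset s).symm
      _ ≤ edgesIn G W := ncard_le_edgesIn G fun e he x hx => by
          simp only [W, Finset.coe_biUnion, Set.mem_iUnion]
          exact ⟨e, he, by simpa using hx⟩
      _ ≤ ℓ * W.card := by simpa using hU W
      _ = (s.biUnion t).card := by simp [hW, mul_comm]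
  obtain ⟨f, hinj, hf⟩ := (Finset.all_card_le_biUnion_card_iff_exists_injective t).1 hall
  refine ⟨fun e => (f e).1, fun e => by simpa [t] using hf e, fun v => ?_⟩
  calc ((fun e => (f e).1) ⁻¹' {v}).ncard ≤ (Set.univ : Set (Fin ℓ)).ncard :=
        Set.ncard_le_ncard_of_injOn (fun e => (f e).2) (fun _ _ => Set.mem_univ _)
          fun e₁ he₁ e₂ he₂ h => hinj (Prod.ext (he₁.trans he₂.symm) h)
    _ = ℓ := by simp

def orientationOfHead (head : G.edgeSet → V) (a b : V) : Prop :=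
  ∃ h : G.Adj a b, head ⟨s(a, b), h⟩ = b

variable {G} {head : G.edgeSet → V}

theorem isOrientation_orientationOfHead (hhead : ∀ e : G.edgeSet, head e ∈ (e : Sym2 V)) :
    IsOrientation G (orientationOfHead G head) := by
  refine ⟨fun a b h => h.1, fun a b hab => ?_⟩
  have hswap : (⟨s(b, a), hab.symm⟩ : G.edgeSet) = ⟨s(a, b), hab⟩ := Subtype.ext Sym2.eq_swap
  have hmem : head ⟨s(a, b), hab⟩ = a ∨ head ⟨s(a, b), hab⟩ = b := Sym2.mem_iff.1 (hhead _)
  simp only [orientationOfHead, hab, hab.symm, exists_true_left, hswap]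
  rcases hmem with h | h <;> simp [h, hab.ne, hab.ne.symm]

theorem ncard_orientationOfHead (hhead : ∀ e : G.edgeSet, head e ∈ (e : Sym2 V)) (v : V) :
    {u | orientationOfHead G head u v}.ncard = (head ⁻¹' {v}).ncard := by
  refine Set.ncard_congr (fun u hu => ⟨s(u, v), hu.1⟩) (fun u hu => hu.2)
    (fun u₁ u₂ _ _ h => Sym2.congr_left.1 (congrArg Subtype.val h)) ?_
  rintro e (he : head e = v)
  obtain ⟨u, hu⟩ := Sym2.mem_iff_exists.1 (he ▸ hhead e)
  have hadj : G.Adj u v := by rw [← G.mem_edgeSet, ← Sym2.eq_swap, ← hu]; exact e.2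
  have he' : (⟨s(u, v), hadj⟩ : G.edgeSet) = e := Subtype.ext (hu.trans Sym2.eq_swap).symm
  exact ⟨u, ⟨hadj, by rw [he', he]⟩, he'⟩

end SimpleGraph

theorem stmt_3 {V : Type*} [Fintype V] (H : SimpleGraph V) (ℓ : ℕ)
    (hcount : H.edgeSet.ncard = ℓ * Fintype.card V) :
    (∃ r : V → V → Prop, IsOrientation H r ∧ ∀ v : V, {u | r u v}.ncard = ℓ) ↔
    (∀ U : Set V, edgesIn H U ≤ ℓ * U.ncard) := by
  refine ⟨fun ⟨r, hr, hdeg⟩ => H.edgesIn_le_of_isOrientation hr fun v => (hdeg v).le, fun hU => ?_⟩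
  obtain ⟨head, hhead, hle⟩ := H.exists_head_of_edgesIn_le hU
  refine ⟨H.orientationOfHead head, isOrientation_orientationOfHead hhead, fun v => ?_⟩
  rw [ncard_orientationOfHead hhead]
  exact Set.ncard_preimage_singleton_eq_of_le head hle
    (by rw [Nat.card_coe_set_eq, hcount, Nat.card_eq_fintype_card]) v
end

section
/- Define \varphi_d(\alpha) = h(\alpha) + (d/2) h(1-2\alpha) - (d-1) h(1-\alpha) for \alpha \in (0, 1/2), where h(x) = -x log x. Then for every integer d \ge 3 the function \varphi_d has a unique root \alpha^{fm}_d in (0, 1/2), and \varphi_d(\alpha) < 0 for all \alpha \in (\alpha^{fm}_d, 1/2). -/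
open Real Set

/-- The entropy function `h(x) = -x log x` (with `h(0) = 0`, since `log 0 = 0` in Mathlib). -/
noncomputable def h (x : ℝ) : ℝ := -x * Real.log x

/-- The first-moment entropy function `φ_d`. -/
noncomputable def phi (d : ℕ) (a : ℝ) : ℝ :=
  h a + ((d : ℝ) / 2) * h (1 - 2 * a) - ((d : ℝ) - 1) * h (1 - a)

/-!
`φ_d` is strictly concave on `[0, 1/2]`: its derivative
`-log α + d log (1 - 2α) - (d - 1) log (1 - α)` has derivative
`-1/α - 2d/(1 - 2α) + (d - 1)/(1 - α) < 0`. Moreover `φ_d(0) = 0`, `φ_d(1/2) = (1 - d/2) log 2 < 0`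
for `d ≥ 3`, and `φ_d(e^{-d}) ≥ d e^{-d} - (d - 1) e^{-d} > 0` because `h(1 - x) ≤ x`. A strictly
concave function that starts at a nonnegative value, becomes positive and ends negative crosses zero
exactly once, and stays negative afterwards.
-/

theorem StrictConcaveOn.lt_of_le_of_lt_of_lt {s : Set ℝ} {f : ℝ → ℝ} (hf : StrictConcaveOn ℝ s f)
    {x y z : ℝ} (hx : x ∈ s) (hz : z ∈ s) (hxy : x < y) (hyz : y < z) (hfxy : f y ≤ f x) :
    f z < f y := by
  have hslope := hf.slope_anti_adjacent hx hz hxy hyz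
  have : (f y - f x) / (y - x) ≤ 0 := div_nonpos_of_nonpos_of_nonneg (by linarith) (by linarith)
  have := (div_lt_iff₀ (sub_pos.2 hyz)).1 (hslope.trans_le this)
  linarith

theorem StrictConcaveOn.existsUnique_zero_of_nonneg_of_pos_of_neg {a b c : ℝ} {f : ℝ → ℝ}
    (hf : StrictConcaveOn ℝ (Icc a b) f) (hcont : ContinuousOn f (Icc a b)) (ha : 0 ≤ f a)
    (hc : c ∈ Ioo a b) (hfc : 0 < f c) (hb : f b < 0) :
    ∃ r ∈ Ioo a b, f r = 0 ∧ (∀ y ∈ Ioo a b, f y = 0 → y = r) ∧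
      (∀ y ∈ Ioo a b, r < y → f y < 0) := by
  obtain ⟨r, ⟨hcr, hrb⟩, hr⟩ : (0 : ℝ) ∈ f '' Ioo c b :=
    intermediate_value_Ioo' hc.2.le (hcont.mono (Icc_subset_Icc_left hc.1.le)) ⟨hb, hfc⟩
  have hr_mem : r ∈ Ioo a b := ⟨hc.1.trans hcr, hrb⟩
  have mem {y : ℝ} (hy : y ∈ Ioo a b) : y ∈ Icc a b := Ioo_subset_Icc_self hy
  have hneg : ∀ y ∈ Ioo a b, r < y → f y < 0 := fun y hy hry =>
    hr ▸ hf.lt_of_le_of_lt_of_lt (mem hc) (mem hy) hcr hry (hr ▸ hfc.le)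
  refine ⟨r, hr_mem, hr, fun y hy hfy => ?_, hneg⟩
  rcases lt_trichotomy y r with hyr | rfl | hry
  · have := hf.lt_of_le_of_lt_of_lt (left_mem_Icc.2 (hc.1.trans hc.2).le) (mem hr_mem) hy.1 hyr
      (hfy ▸ ha)
    linarith
  · rfl
  · linarith [hneg y hy hry]

theorem h_eq_negMulLog : h = negMulLog := rfl

theorem continuous_phi (d : ℕ) : Continuous (phi d) := by
  unfold phi
  rw [h_eq_negMulLog]
  fun_prop

noncomputable def phiDeriv (d : ℕ) (a : ℝ) : ℝ :=
  -log a + d * log (1 - 2 * a) - (d - 1) * log (1 - a)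

theorem hasDerivAt_phi (d : ℕ) {a : ℝ} (ha : a ∈ Ioo (0 : ℝ) (1 / 2)) :
    HasDerivAt (phi d) (phiDeriv d a) a := by
  have h₀ : a ≠ 0 := ha.1.ne'
  have h₁ : 1 - 2 * a ≠ 0 := by linarith [ha.2]
  have h₂ : 1 - a ≠ 0 := by linarith [ha.2]
  have hlin₁ := ((hasDerivAt_id a).const_mul 2).const_sub 1
  have hlin₂ := (hasDerivAt_id a).const_sub 1
  have := ((hasDerivAt_negMulLog h₀).add
    (((hasDerivAt_negMulLog h₁).comp a hlin₁).const_mul ((d : ℝ) / 2))).sub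
    (((hasDerivAt_negMulLog h₂).comp a hlin₂).const_mul ((d : ℝ) - 1))
  refine this.congr_deriv ?_
  simp only [phiDeriv]
  ring

theorem hasDerivAt_phiDeriv (d : ℕ) {a : ℝ} (ha : a ∈ Ioo (0 : ℝ) (1 / 2)) :
    HasDerivAt (phiDeriv d) (-a⁻¹ - 2 * d / (1 - 2 * a) + (d - 1) / (1 - a)) a := by
  have h₁ : 1 - 2 * a ≠ 0 := by linarith [ha.2]
  have h₂ : 1 - a ≠ 0 := by linarith [ha.2]
  have hlin₁ := ((hasDerivAt_id a).const_mul 2).const_sub 1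
  have hlin₂ := (hasDerivAt_id a).const_sub 1
  have := (((hasDerivAt_log ha.1.ne').neg).add
    (((hasDerivAt_log h₁).comp a hlin₁).const_mul (d : ℝ))).sub
    (((hasDerivAt_log h₂).comp a hlin₂).const_mul ((d : ℝ) - 1))
  refine this.congr_deriv ?_
  field_simp
  ring

theorem strictAntiOn_phiDeriv (d : ℕ) : StrictAntiOn (phiDeriv d) (Ioo 0 (1 / 2)) := by
  refine strictAntiOn_of_deriv_neg (convex_Ioo _ _)
    (fun a ha => (hasDerivAt_phiDeriv d ha).continuousAt.continuousWithinAt) ?_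
  rw [interior_Ioo]
  intro a ha
  rw [(hasDerivAt_phiDeriv d ha).deriv]
  obtain ⟨ha₀, ha₁⟩ := ha
  have : ((d : ℝ) - 1) / (1 - a) < 2 * d / (1 - 2 * a) := by
    rw [div_lt_div_iff₀ (by linarith) (by linarith)]
    nlinarith [d.cast_nonneg (α := ℝ)]
  linarith [inv_pos.2 ha₀]

theorem strictConcaveOn_phi (d : ℕ) : StrictConcaveOn ℝ (Icc 0 (1 / 2)) (phi d) := by
  refine StrictAntiOn.strictConcaveOn_of_deriv (convex_Icc _ _) (continuous_phi d).continuousOn ?_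
  rw [interior_Icc]
  intro x hx y hy hxy
  rw [(hasDerivAt_phi d hx).deriv, (hasDerivAt_phi d hy).deriv]
  exact strictAntiOn_phiDeriv d hx hy hxy

theorem phi_zero (d : ℕ) : phi d 0 = 0 := by
  simp [phi, h_eq_negMulLog]

theorem phi_one_half_neg {d : ℕ} (hd : 2 < d) : phi d (1 / 2) < 0 := by
  have hd' : (2 : ℝ) < d := by exact_mod_cast hd
  have h_half : h (1 / 2) = log 2 / 2 := by
    simp only [h, one_div, log_inv]
    ring
  have hval : phi d (1 / 2) = (2 - d) * (log 2 / 2) := by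
    rw [phi, show (1 : ℝ) - 2 * (1 / 2) = 0 by norm_num, show (1 : ℝ) - 1 / 2 = 1 / 2 by norm_num,
      h_half, h_eq_negMulLog, negMulLog_zero]
    ring
  rw [hval]
  exact mul_neg_of_neg_of_pos (by linarith) (by positivity)

theorem exp_neg_natCast_lt_one_half {d : ℕ} (hd : 0 < d) : exp (-d) < 1 / 2 := by
  have hd' : (1 : ℝ) ≤ d := by exact_mod_cast hd
  calc exp (-d) ≤ exp (-1) := exp_le_exp.2 (by linarith)
    _ < 1 / 2 := by
      rw [exp_neg, inv_lt_comm₀ (exp_pos 1) (by norm_num)]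
      linarith [add_one_lt_exp one_ne_zero]

theorem phi_exp_neg_pos {d : ℕ} (hd : 0 < d) : 0 < phi d (exp (-d)) := by
  set a := exp (-d)
  have ha₀ : 0 < a := exp_pos _
  have ha₁ : a < 1 / 2 := exp_neg_natCast_lt_one_half hd
  have hd' : (1 : ℝ) ≤ d := by exact_mod_cast hd
  have h_a : h a = d * a := by simp [a, h, mul_comm]
  have h_one_sub_two : 0 ≤ (d : ℝ) / 2 * h (1 - 2 * a) :=
    mul_nonneg (by positivity) (negMulLog_nonneg (by linarith) (by linarith))
  have h_one_sub : h (1 - a) ≤ a := by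
    simpa [h_eq_negMulLog] using negMulLog_le_one_sub_self (x := 1 - a) (by linarith)
  have h_one_sub' : ((d : ℝ) - 1) * h (1 - a) ≤ (d - 1) * a :=
    mul_le_mul_of_nonneg_left h_one_sub (by linarith)
  simp only [phi]
  linarith

theorem stmt_10 (d : ℕ) (hd : 3 ≤ d) :
    ∃ αfm ∈ Ioo (0 : ℝ) (1 / 2),
      phi d αfm = 0 ∧
      (∀ β ∈ Ioo (0 : ℝ) (1 / 2), phi d β = 0 → β = αfm) ∧
      (∀ β ∈ Ioo (0 : ℝ) (1 / 2), αfm < β → phi d β < 0) :=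
  (strictConcaveOn_phi d).existsUnique_zero_of_nonneg_of_pos_of_neg
    (continuous_phi d).continuousOn (phi_zero d).ge
    ⟨exp_pos _, exp_neg_natCast_lt_one_half (by omega)⟩ (phi_exp_neg_pos (by omega))
    (phi_one_half_neg hd)
end
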